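/- arXiv:1906.08141 — 4 statements merged into one kernel-verified Lean document; each statement's English description precedes it below -/
import Mathlib

section
/- Let P, Q : [0,1] → ℝ² be curves and ε ≥ 0. Suppose there exists a finite set S of axis-parallel segments contained in the free space F_ε(P,Q) such that proj_x(⋃S) = [0,1] and proj_y(⋃S) = [0,1], and the x-projections (respectively y-projections) of all segments of S have pairwise disjoint relative interiors. Then, letting the endpoints of the x-projections of the segments define a subdivision 0 = a₀ < … < a_p = 1 and the endpoints of the y-projections define 0 = b₀ < … < b_q = 1, the k-station condition holds with k ≤ 2|S|: every subinterval [a_{i−1},a_i] of P is within distance ε of some single point Q(b_j), and every subinterval [b_{j−1},b_j] of Q is within distance ε of some single point P(a_i). -/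
/-- A horizontal segment in the plane: `[x₁,x₂] × {y}`. -/
def IsHorizSeg (s : Set (ℝ × ℝ)) : Prop :=
  ∃ x₁ x₂ y : ℝ, s = Set.Icc x₁ x₂ ×ˢ ({y} : Set ℝ)

/-- A vertical segment in the plane: `{x} × [y₁,y₂]`. -/
def IsVertSeg (s : Set (ℝ × ℝ)) : Prop :=
  ∃ x y₁ y₂ : ℝ, s = ({x} : Set ℝ) ×ˢ Set.Icc y₁ y₂

/-!
The endpoints of the `x`-projections of the segments, sorted, subdivide `[0,1]`. Each piece lies
in the `x`-projection of one segment, which has to be horizontal, and its height is an endpoint of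
a `y`-projection, hence a station on the `Q` side; the `y`-side is the same argument after swapping
coordinates. There are at most `|S|` pieces because every positive breakpoint is the right end of
some projection.
-/

open Set

structure IsUnitIntervalTiling {ι : Type*} (S : Finset ι) (u v : ι → ℝ) : Prop where
  le : ∀ s ∈ S, u s ≤ v s
  biUnion_eq : ⋃ s ∈ S, Icc (u s) (v s) = Icc 0 1
  pairwiseDisjoint : (S : Set ι).PairwiseDisjoint fun s => Ioo (u s) (v s)

noncomputable def tileEndpoints {ι : Type*} (S : Finset ι) (u v : ι → ℝ) : Finset ℝ :=
  S.image u ∪ S.image v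

namespace IsUnitIntervalTiling

variable {ι : Type*} {S : Finset ι} {u v : ι → ℝ}

theorem exists_mem_Icc (h : IsUnitIntervalTiling S u v) {x : ℝ} (hx : x ∈ Icc 0 1) :
    ∃ s ∈ S, x ∈ Icc (u s) (v s) := by
  rw [← h.biUnion_eq] at hx
  obtain ⟨s, hs, hxs⟩ := mem_iUnion₂.1 hx
  exact ⟨s, hs, hxs⟩

theorem Icc_subset (h : IsUnitIntervalTiling S u v) {s : ι} (hs : s ∈ S) :
    Icc (u s) (v s) ⊆ Icc 0 1 :=
  h.biUnion_eq ▸ subset_biUnion_of_mem (u := fun s => Icc (u s) (v s)) hs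

theorem tileEndpoints_subset (h : IsUnitIntervalTiling S u v) {x : ℝ}
    (hx : x ∈ tileEndpoints S u v) : x ∈ Icc 0 1 := by
  simp only [tileEndpoints, Finset.mem_union, Finset.mem_image] at hx
  rcases hx with ⟨s, hs, rfl⟩ | ⟨s, hs, rfl⟩
  · exact h.Icc_subset hs (left_mem_Icc.2 (h.le s hs))
  · exact h.Icc_subset hs (right_mem_Icc.2 (h.le s hs))

theorem zero_mem_tileEndpoints (h : IsUnitIntervalTiling S u v) : 0 ∈ tileEndpoints S u v := by
  obtain ⟨s, hs, hs0⟩ := h.exists_mem_Icc (left_mem_Icc.2 zero_le_one)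
  have : u s = 0 := le_antisymm hs0.1 (h.Icc_subset hs (left_mem_Icc.2 (h.le s hs))).1
  exact Finset.mem_union_left _ (Finset.mem_image.2 ⟨s, hs, this⟩)

theorem one_mem_tileEndpoints (h : IsUnitIntervalTiling S u v) : 1 ∈ tileEndpoints S u v := by
  obtain ⟨s, hs, hs1⟩ := h.exists_mem_Icc (right_mem_Icc.2 zero_le_one)
  have : v s = 1 := le_antisymm (h.Icc_subset hs (right_mem_Icc.2 (h.le s hs))).2 hs1.2
  exact Finset.mem_union_right _ (Finset.mem_image.2 ⟨s, hs, this⟩)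

/-- The tiles ending before `x` form a closed set containing `[0, x)`, hence `x` itself. -/
theorem exists_lt_le (h : IsUnitIntervalTiling S u v) {x : ℝ} (hx : x ∈ Ioc 0 1) :
    ∃ s ∈ S, u s < x ∧ x ≤ v s := by
  by_contra! hleft
  have hIco : Ico 0 x ⊆ ⋃ s ∈ S.filter (v · < x), Icc (u s) (v s) := by
    intro z hz
    obtain ⟨s, hs, hzs⟩ := h.exists_mem_Icc ⟨hz.1, hz.2.le.trans hx.2⟩
    have hus : u s < x := hzs.1.trans_lt hz.2
    refine mem_biUnion (Finset.mem_filter.2 ⟨hs, ?_⟩) hzs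
    exact not_le.1 fun hxv => (hleft s hs hus).not_ge hxv
  have hclosed : IsClosed (⋃ s ∈ S.filter (v · < x), Icc (u s) (v s)) :=
    isClosed_biUnion_finset fun _ _ => isClosed_Icc
  have hxmem := hclosed.closure_subset_iff.2 hIco (closure_Ico hx.1.ne ▸ right_mem_Icc.2 hx.1.le)
  obtain ⟨s, hs, hxs⟩ := mem_iUnion₂.1 hxmem
  exact (Finset.mem_filter.1 hs).2.not_ge hxs.2

/-- The tile reaching `x` from the left either ends at `x` or has `x` in its interior; in the
latter case a tile starting at `x` must be degenerate. -/
theorem mem_image_right_of_mem_tileEndpoints (h : IsUnitIntervalTiling S u v) {x : ℝ}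
    (hx : x ∈ tileEndpoints S u v) (hx0 : 0 < x) : x ∈ S.image v := by
  obtain ⟨s, hs, hus, hxv⟩ := h.exists_lt_le ⟨hx0, (h.tileEndpoints_subset hx).2⟩
  rcases Finset.mem_union.1 hx with hxu | hxright
  · obtain ⟨t, ht, rfl⟩ := Finset.mem_image.1 hxu
    rcases hxv.eq_or_lt with hvs | hvs
    · exact Finset.mem_image.2 ⟨s, hs, hvs.symm⟩
    have hst : s ≠ t := by rintro rfl; exact hus.false
    suffices v t ≤ u t from Finset.mem_image.2 ⟨t, ht, le_antisymm this (h.le t ht)⟩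
    by_contra! hvt
    obtain ⟨z, hz, hzv⟩ := exists_between (lt_min hvs hvt)
    exact disjoint_left.1 (h.pairwiseDisjoint hs ht hst)
      ⟨hus.trans hz, hzv.trans_le (min_le_left _ _)⟩ ⟨hz, hzv.trans_le (min_le_right _ _)⟩
  · exact hxright

theorem card_tileEndpoints_le (h : IsUnitIntervalTiling S u v) :
    (tileEndpoints S u v).card ≤ S.card + 1 := by
  classical
  have hsub : tileEndpoints S u v ⊆ insert 0 (S.image v) := fun x hx =>
    (h.tileEndpoints_subset hx).1.eq_or_lt.elim (fun h0 => h0 ▸ Finset.mem_insert_self _ _)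
      fun h0 => Finset.mem_insert_of_mem (h.mem_image_right_of_mem_tileEndpoints hx h0)
  calc (tileEndpoints S u v).card ≤ (insert 0 (S.image v)).card := Finset.card_le_card hsub
    _ ≤ (S.image v).card + 1 := Finset.card_insert_le _ _
    _ ≤ S.card + 1 := by gcongr; exact Finset.card_image_le

theorem exists_Icc_subset_of_gap (h : IsUnitIntervalTiling S u v) {x y : ℝ} (hxy : x < y)
    (hx : 0 ≤ x) (hy : y ≤ 1) (hgap : ∀ z ∈ tileEndpoints S u v, z ≤ x ∨ y ≤ z) :
    ∃ s ∈ S, Icc x y ⊆ Icc (u s) (v s) := by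
  obtain ⟨m, hxm, hmy⟩ := exists_between hxy
  obtain ⟨s, hs, hms⟩ := h.exists_mem_Icc ⟨hx.trans hxm.le, hmy.le.trans hy⟩
  have hu := hgap (u s) (Finset.mem_union_left _ (Finset.mem_image_of_mem u hs))
  have hv := hgap (v s) (Finset.mem_union_right _ (Finset.mem_image_of_mem v hs))
  refine ⟨s, hs, Icc_subset_Icc (hu.resolve_right ?_) (hv.resolve_left ?_)⟩
  · exact fun h' => (hms.1.trans_lt hmy).not_ge h'
  · exact fun h' => (hxm.trans_le hms.2).not_ge h'

theorem exists_subdivision (h : IsUnitIntervalTiling S u v) :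
    ∃ (p : ℕ) (a : Fin (p + 1) → ℝ), 0 < p ∧ p ≤ S.card ∧ StrictMono a ∧
      a 0 = 0 ∧ a (Fin.last p) = 1 ∧
      (∀ i : Fin p, ∃ s ∈ S, Icc (a i.castSucc) (a i.succ) ⊆ Icc (u s) (v s)) ∧
      ∀ x ∈ tileEndpoints S u v, ∃ j, a j = x := by
  set A := tileEndpoints S u v
  have h01 : 1 < A.card := Finset.one_lt_card.2
    ⟨0, h.zero_mem_tileEndpoints, 1, h.one_mem_tileEndpoints, zero_ne_one⟩
  obtain ⟨p, hp⟩ : ∃ p, A.card = p + 1 := ⟨A.card - 1, by omega⟩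
  set a := A.orderEmbOfFin hp
  have hrange : ∀ x ∈ A, ∃ j, a j = x := fun x hx => by
    rw [← mem_range, A.range_orderEmbOfFin hp]; exact hx
  have hmem : ∀ j, a j ∈ A := A.orderEmbOfFin_mem hp
  have ha0 : a 0 = 0 := by
    obtain ⟨j, hj⟩ := hrange 0 h.zero_mem_tileEndpoints
    exact le_antisymm (hj ▸ a.monotone (Fin.zero_le j)) (h.tileEndpoints_subset (hmem 0)).1
  have ha1 : a (Fin.last p) = 1 := by
    obtain ⟨j, hj⟩ := hrange 1 h.one_mem_tileEndpoints
    exact le_antisymm (h.tileEndpoints_subset (hmem _)).2 (hj ▸ a.monotone (Fin.le_last j))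
  have hconsec (i : Fin p) : ∀ z ∈ A, z ≤ a i.castSucc ∨ a i.succ ≤ z := fun z hz => by
    obtain ⟨j, rfl⟩ := hrange z hz
    rcases le_or_gt j i.castSucc with hj | hj
    · exact .inl (a.monotone hj)
    · exact .inr (a.monotone (Fin.castSucc_lt_iff_succ_le.1 hj))
  refine ⟨p, a, by omega, by linarith [h.card_tileEndpoints_le], a.strictMono, ha0, ha1,
    fun i => h.exists_Icc_subset_of_gap (a.strictMono i.castSucc_lt_succ)
      (h.tileEndpoints_subset (hmem _)).1 (h.tileEndpoints_subset (hmem _)).2 (hconsec i), hrange⟩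

end IsUnitIntervalTiling

section Segments

variable {s : Set (ℝ × ℝ)}

theorem fst_image_eq_Icc_sInf_sSup (h : IsHorizSeg s ∨ IsVertSeg s) (hs : s.Nonempty) :
    Prod.fst '' s = Icc (sInf (Prod.fst '' s)) (sSup (Prod.fst '' s)) := by
  suffices ∃ a b, a ≤ b ∧ Prod.fst '' s = Icc a b by
    obtain ⟨a, b, hab, hJ⟩ := this
    rw [hJ, csInf_Icc hab, csSup_Icc hab]
  rcases h with ⟨x₁, x₂, y, rfl⟩ | ⟨x, y₁, y₂, rfl⟩
  · exact ⟨x₁, x₂, nonempty_Icc.1 hs.fst, fst_image_prod _ (singleton_nonempty y)⟩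
  · exact ⟨x, x, le_rfl, by rw [fst_image_prod _ hs.snd, Icc_self]⟩

theorem Icc_prod_singleton_subset_of_subset_fst_image (h : IsHorizSeg s ∨ IsVertSeg s)
    {x x' : ℝ} (hxx' : x < x') (hsub : Icc x x' ⊆ Prod.fst '' s) :
    Icc x x' ×ˢ {sInf (Prod.snd '' s)} ⊆ s := by
  rcases h with ⟨x₁, x₂, y, rfl⟩ | ⟨x₀, y₁, y₂, rfl⟩
  · have hne : (Icc x₁ x₂).Nonempty :=
      (image_nonempty.1 ⟨x, hsub (left_mem_Icc.2 hxx'.le)⟩).fst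
    rw [snd_image_prod hne, csInf_singleton]
    exact prod_mono (hsub.trans (fst_image_prod_subset _ _)) subset_rfl
  · have hfst := hsub.trans (fst_image_prod_subset _ _)
    have : x = x' := (hfst (left_mem_Icc.2 hxx'.le)).trans (hfst (right_mem_Icc.2 hxx'.le)).symm
    exact absurd this hxx'.ne

theorem fst_image_image_swap {α β : Type*} (s : Set (α × β)) :
    Prod.fst '' (Prod.swap '' s) = Prod.snd '' s :=
  image_image _ _ _

theorem snd_image_image_swap {α β : Type*} (s : Set (α × β)) :
    Prod.snd '' (Prod.swap '' s) = Prod.fst '' s :=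
  image_image _ _ _

theorem isHorizSeg_or_isVertSeg_image_swap (h : IsHorizSeg s ∨ IsVertSeg s) :
    IsHorizSeg (Prod.swap '' s) ∨ IsVertSeg (Prod.swap '' s) := by
  rcases h with ⟨x₁, x₂, y, rfl⟩ | ⟨x, y₁, y₂, rfl⟩
  · exact .inr ⟨y, x₁, x₂, image_swap_prod _ _⟩
  · exact .inl ⟨y₁, y₂, x, image_swap_prod _ _⟩

end Segments

theorem exists_fst_subdivision {S : Finset (Set (ℝ × ℝ))}
    (hseg : ∀ s ∈ S, IsHorizSeg s ∨ IsVertSeg s)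
    (hpx : Prod.fst '' ⋃₀ (S : Set (Set (ℝ × ℝ))) = Icc 0 1)
    (hdx : ∀ s ∈ S, ∀ t ∈ S, s ≠ t →
      interior (Prod.fst '' s) ∩ interior (Prod.fst '' t) = ∅) :
    ∃ (p : ℕ) (a : Fin (p + 1) → ℝ), 0 < p ∧ p ≤ S.card ∧ StrictMono a ∧
      a 0 = 0 ∧ a (Fin.last p) = 1 ∧
      (∀ i : Fin p, ∃ s ∈ S, s.Nonempty ∧
        Icc (a i.castSucc) (a i.succ) ×ˢ {sInf (Prod.snd '' s)} ⊆ s) ∧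
      ∀ s ∈ S, s.Nonempty → ∃ j, a j = sInf (Prod.fst '' s) := by
  classical
  set T := S.filter Set.Nonempty
  have hT : ∀ s ∈ T, Prod.fst '' s = Icc (sInf (Prod.fst '' s)) (sSup (Prod.fst '' s)) :=
    fun s hs => fst_image_eq_Icc_sInf_sSup (hseg s (Finset.mem_filter.1 hs).1)
      (Finset.mem_filter.1 hs).2
  have htiling : IsUnitIntervalTiling T (fun s => sInf (Prod.fst '' s))
      (fun s => sSup (Prod.fst '' s)) := by
    refine ⟨fun s hs => nonempty_Icc.1 ?_, ?_, fun s hs t ht hst => ?_⟩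
    · rw [← hT s hs]; exact (Finset.mem_filter.1 hs).2.image _
    · rw [← hpx, iUnion₂_congr fun s hs => (hT s hs).symm]
      ext z
      simp only [Finset.mem_filter, mem_iUnion, mem_image, Prod.exists, exists_and_right,
        exists_eq_right, exists_prop, and_assoc, mem_sUnion, SetLike.mem_coe, T]
      exact ⟨fun ⟨s, hs, _, y, hy⟩ => ⟨y, s, hs, hy⟩, fun ⟨y, s, hs, hy⟩ => ⟨s, hs, ⟨_, hy⟩, y, hy⟩⟩
    · rw [Function.onFun, ← interior_Icc, ← interior_Icc, ← hT s hs, ← hT t ht,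
        disjoint_iff_inter_eq_empty]
      exact hdx s (Finset.mem_filter.1 hs).1 t (Finset.mem_filter.1 ht).1 hst
  obtain ⟨p, a, hp, hpT, ha, ha0, ha1, hgap, hends⟩ := htiling.exists_subdivision
  refine ⟨p, a, hp, hpT.trans (Finset.card_filter_le _ _), ha, ha0, ha1, fun i => ?_,
    fun s hs hne => hends _ (Finset.mem_union_left _ (Finset.mem_image_of_mem _
      (Finset.mem_filter.2 ⟨hs, hne⟩)))⟩
  obtain ⟨s, hs, hsub⟩ := hgap i
  obtain ⟨hsS, hne⟩ := Finset.mem_filter.1 hs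
  rw [← hT s hs] at hsub
  exact ⟨s, hsS, hne, Icc_prod_singleton_subset_of_subset_fst_image (hseg s hsS)
    (ha i.castSucc_lt_succ) hsub⟩

theorem exists_snd_subdivision {S : Finset (Set (ℝ × ℝ))}
    (hseg : ∀ s ∈ S, IsHorizSeg s ∨ IsVertSeg s)
    (hpy : Prod.snd '' ⋃₀ (S : Set (Set (ℝ × ℝ))) = Icc 0 1)
    (hdy : ∀ s ∈ S, ∀ t ∈ S, s ≠ t →
      interior (Prod.snd '' s) ∩ interior (Prod.snd '' t) = ∅) :
    ∃ (q : ℕ) (b : Fin (q + 1) → ℝ), 0 < q ∧ q ≤ S.card ∧ StrictMono b ∧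
      b 0 = 0 ∧ b (Fin.last q) = 1 ∧
      (∀ j : Fin q, ∃ s ∈ S, s.Nonempty ∧
        {sInf (Prod.fst '' s)} ×ˢ Icc (b j.castSucc) (b j.succ) ⊆ s) ∧
      ∀ s ∈ S, s.Nonempty → ∃ j, b j = sInf (Prod.snd '' s) := by
  classical
  set S' := S.image (Prod.swap '' ·)
  have hseg' : ∀ s ∈ S', IsHorizSeg s ∨ IsVertSeg s := by
    simp only [S', Finset.forall_mem_image]
    exact fun s hs => isHorizSeg_or_isVertSeg_image_swap (hseg s hs)
  have hpx' : Prod.fst '' ⋃₀ (S' : Set (Set (ℝ × ℝ))) = Icc 0 1 := by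
    rw [← hpy]
    simp only [S', Finset.coe_image, sUnion_image, SetLike.mem_coe, image_iUnion₂,
      fst_image_image_swap, image_sUnion]
  have hdx' : ∀ s ∈ S', ∀ t ∈ S', s ≠ t →
      interior (Prod.fst '' s) ∩ interior (Prod.fst '' t) = ∅ := by
    simp only [S', Finset.forall_mem_image, fst_image_image_swap]
    exact fun s hs t ht hst => hdy s hs t ht fun h => hst (h ▸ rfl)
  obtain ⟨q, b, hq, hqS, hb, hb0, hb1, hgap, hends⟩ := exists_fst_subdivision hseg' hpx' hdx'
  refine ⟨q, b, hq, hqS.trans Finset.card_image_le, hb, hb0, hb1, fun j => ?_, fun s hs hne => ?_⟩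
  · obtain ⟨s', hs', hne, hsub⟩ := hgap j
    obtain ⟨s, hs, rfl⟩ := Finset.mem_image.1 hs'
    refine ⟨s, hs, hne.of_image, ?_⟩
    rw [snd_image_image_swap] at hsub
    rw [← image_swap_prod, image_subset_iff, ← image_swap_eq_preimage_swap]
    exact hsub
  · simpa only [fst_image_image_swap] using hends _ (Finset.mem_image_of_mem _ hs) (hne.image _)

theorem stmt_9_general (P Q : ℝ → EuclideanSpace ℝ (Fin 2))
    (ε : ℝ) (S : Finset (Set (ℝ × ℝ)))
    (hseg : ∀ s ∈ S, IsHorizSeg s ∨ IsVertSeg s)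
    (hfree : ∀ s ∈ S, s ⊆ {st : ℝ × ℝ | st.1 ∈ Set.Icc (0:ℝ) 1 ∧ st.2 ∈ Set.Icc (0:ℝ) 1 ∧
      dist (P st.1) (Q st.2) ≤ ε})
    (hpx : Prod.fst '' ⋃₀ (S : Set (Set (ℝ × ℝ))) = Set.Icc (0:ℝ) 1)
    (hpy : Prod.snd '' ⋃₀ (S : Set (Set (ℝ × ℝ))) = Set.Icc (0:ℝ) 1)
    (hdx : ∀ s ∈ S, ∀ t ∈ S, s ≠ t →
      interior (Prod.fst '' s) ∩ interior (Prod.fst '' t) = ∅)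
    (hdy : ∀ s ∈ S, ∀ t ∈ S, s ≠ t →
      interior (Prod.snd '' s) ∩ interior (Prod.snd '' t) = ∅) :
    ∃ (p q : ℕ) (a : Fin (p + 1) → ℝ) (b : Fin (q + 1) → ℝ),
      0 < p ∧ 0 < q ∧ p + q ≤ 2 * S.card ∧
      StrictMono a ∧ StrictMono b ∧
      a 0 = 0 ∧ a (Fin.last p) = 1 ∧ b 0 = 0 ∧ b (Fin.last q) = 1 ∧
      (∀ i : Fin p, ∃ j : Fin (q + 1),
        ∀ s ∈ Set.Icc (a i.castSucc) (a i.succ), dist (P s) (Q (b j)) ≤ ε) ∧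
      (∀ j : Fin q, ∃ i : Fin (p + 1),
        ∀ t ∈ Set.Icc (b j.castSucc) (b j.succ), dist (P (a i)) (Q t) ≤ ε) := by
  obtain ⟨p, a, hp, hpS, ha, ha0, ha1, hgapa, hendsa⟩ := exists_fst_subdivision hseg hpx hdx
  obtain ⟨q, b, hq, hqS, hb, hb0, hb1, hgapb, hendsb⟩ := exists_snd_subdivision hseg hpy hdy
  refine ⟨p, q, a, b, hp, hq, by omega, ha, hb, ha0, ha1, hb0, hb1, fun i => ?_, fun j => ?_⟩
  · obtain ⟨s, hs, hne, hsub⟩ := hgapa i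
    obtain ⟨j, hj⟩ := hendsb s hs hne
    refine ⟨j, fun x hx => ?_⟩
    rw [hj]
    exact (hfree s hs (hsub (mk_mem_prod hx (mem_singleton _)))).2.2
  · obtain ⟨s, hs, hne, hsub⟩ := hgapb j
    obtain ⟨i, hi⟩ := hendsa s hs hne
    refine ⟨i, fun y hy => ?_⟩
    rw [hi]
    exact (hfree s hs (hsub (mk_mem_prod (mem_singleton _) hy))).2.2

/-- A finite set `S` of axis-parallel segments in the free space `F_ε(P,Q)`,
whose `x`- and `y`-projections cover `[0,1]` and have pairwise disjoint relative interiors,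
yields a `k`-station certificate at distance `ε` with `k = p + q ≤ 2|S|`. -/
theorem stmt_9 (P Q : ℝ → EuclideanSpace ℝ (Fin 2))
    (hP : ContinuousOn P (Set.Icc 0 1)) (hQ : ContinuousOn Q (Set.Icc 0 1))
    (ε : ℝ) (hε : 0 ≤ ε) (S : Finset (Set (ℝ × ℝ)))
    (hseg : ∀ s ∈ S, IsHorizSeg s ∨ IsVertSeg s)
    (hfree : ∀ s ∈ S, s ⊆ {st : ℝ × ℝ | st.1 ∈ Set.Icc (0:ℝ) 1 ∧ st.2 ∈ Set.Icc (0:ℝ) 1 ∧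
      dist (P st.1) (Q st.2) ≤ ε})
    (hpx : Prod.fst '' ⋃₀ (S : Set (Set (ℝ × ℝ))) = Set.Icc (0:ℝ) 1)
    (hpy : Prod.snd '' ⋃₀ (S : Set (Set (ℝ × ℝ))) = Set.Icc (0:ℝ) 1)
    (hdx : ∀ s ∈ S, ∀ t ∈ S, s ≠ t →
      interior (Prod.fst '' s) ∩ interior (Prod.fst '' t) = ∅)
    (hdy : ∀ s ∈ S, ∀ t ∈ S, s ≠ t →
      interior (Prod.snd '' s) ∩ interior (Prod.snd '' t) = ∅) :
    ∃ (p q : ℕ) (a : Fin (p + 1) → ℝ) (b : Fin (q + 1) → ℝ),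
      0 < p ∧ 0 < q ∧ p + q ≤ 2 * S.card ∧
      StrictMono a ∧ StrictMono b ∧
      a 0 = 0 ∧ a (Fin.last p) = 1 ∧ b 0 = 0 ∧ b (Fin.last q) = 1 ∧
      (∀ i : Fin p, ∃ j : Fin (q + 1),
        ∀ s ∈ Set.Icc (a i.castSucc) (a i.succ), dist (P s) (Q (b j)) ≤ ε) ∧
      (∀ j : Fin q, ∃ i : Fin (p + 1),
        ∀ t ∈ Set.Icc (b j.castSucc) (b j.succ), dist (P (a i)) (Q t) ≤ ε) :=
  stmt_9_general P Q ε S hseg hfree hpx hpy hdx hdy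
end

section
/- Let P, Q : [0,1] → ℝ² and k ∈ ℕ. Then d_cut(k, P, Q) ≤ d_station(k, P, Q), where d_cut(k,P,Q) is the k-Fréchet (cut) distance and d_station(k,P,Q) is the k-station distance. -/
open Set
open scoped ENNReal

/-- A `k`-cut (k-Fréchet) certificate at distance `ε`: both curves are subdivided into `k`
(possibly degenerate) subcurves, matched by a permutation so that matched pieces have Fréchet
distance at most `ε` (witnessed by monotone continuous reparameterizations). -/
def CertCut (k : ℕ) (P Q : ℝ → EuclideanSpace ℝ (Fin 2)) (ε : ℝ) : Prop :=
  ∃ (u v : Fin (k + 1) → ℝ), Monotone u ∧ Monotone v ∧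
    u 0 = 0 ∧ u (Fin.last k) = 1 ∧ v 0 = 0 ∧ v (Fin.last k) = 1 ∧
    ∃ π : Equiv.Perm (Fin k), ∀ i : Fin k, ∃ σ τ : ℝ → ℝ,
      ContinuousOn σ (Icc 0 1) ∧ ContinuousOn τ (Icc 0 1) ∧
      MonotoneOn σ (Icc 0 1) ∧ MonotoneOn τ (Icc 0 1) ∧
      σ '' Icc 0 1 = Icc (u i.castSucc) (u i.succ) ∧
      τ '' Icc 0 1 = Icc (v (π i).castSucc) (v (π i).succ) ∧
      ∀ t ∈ Icc (0:ℝ) 1, dist (P (σ t)) (Q (τ t)) ≤ ε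

/-- A `k`-station certificate at distance `ε`: subdivisions of `P` and `Q` into `p` and `q`
pieces with `p + q = k` such that each piece of `P` lies within `ε` of some station `Q(b j)`
and each piece of `Q` lies within `ε` of some station `P(a i)`. -/
def CertStation (k : ℕ) (P Q : ℝ → EuclideanSpace ℝ (Fin 2)) (ε : ℝ) : Prop :=
  ∃ p q : ℕ, 0 < p ∧ 0 < q ∧ p + q = k ∧
    ∃ (a : Fin (p + 1) → ℝ) (b : Fin (q + 1) → ℝ),
      StrictMono a ∧ StrictMono b ∧
      a 0 = 0 ∧ a (Fin.last p) = 1 ∧ b 0 = 0 ∧ b (Fin.last q) = 1 ∧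
      (∀ i : Fin p, ∃ j : Fin q,
        ∀ s ∈ Icc (a i.castSucc) (a i.succ), dist (P s) (Q (b j.succ)) ≤ ε) ∧
      (∀ j : Fin q, ∃ i : Fin p,
        ∀ t ∈ Icc (b j.castSucc) (b j.succ), dist (P (a i.succ)) (Q t) ≤ ε)

/-- The `k`-Fréchet (cut) distance, as an infimum in `ℝ≥0∞`. -/
noncomputable def dcut (k : ℕ) (P Q : ℝ → EuclideanSpace ℝ (Fin 2)) : ℝ≥0∞ :=
  ⨅ (ε : ℝ) (_ : 0 < ε ∧ CertCut k P Q ε), ENNReal.ofReal ε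

/-- The `k`-station distance, as an infimum in `ℝ≥0∞`. -/
noncomputable def dstation (k : ℕ) (P Q : ℝ → EuclideanSpace ℝ (Fin 2)) : ℝ≥0∞ :=
  ⨅ (ε : ℝ) (_ : 0 < ε ∧ CertStation k P Q ε), ENNReal.ofReal ε

/-!
A station certificate is turned into a cut certificate with the same `ε`. Each of the `p` pieces
of `P` is matched with a degenerate piece of `Q` sitting at its station, and each of the `q`
pieces of `Q` with a degenerate piece of `P` at its station; inserting these degenerate pieces
gives both curves `p + q` pieces. A curve within `ε` of a point is at Fréchet distance at most
`ε` from that point (reparametrize the curve affinely and keep the point constant).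
-/

section FrechetMatch

variable {α : Type*} [PseudoMetricSpace α] {P Q : ℝ → α} {ε : ℝ}

/-- The subcurves `P|[I.1, I.2]` and `Q|[J.1, J.2]` are at Fréchet distance at most `ε`. -/
def FrechetMatch (P Q : ℝ → α) (ε : ℝ) (I J : ℝ × ℝ) : Prop :=
  ∃ σ τ : ℝ → ℝ, ContinuousOn σ (Icc 0 1) ∧ ContinuousOn τ (Icc 0 1) ∧
    MonotoneOn σ (Icc 0 1) ∧ MonotoneOn τ (Icc 0 1) ∧
    σ '' Icc 0 1 = Icc I.1 I.2 ∧ τ '' Icc 0 1 = Icc J.1 J.2 ∧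
    ∀ t ∈ Icc (0 : ℝ) 1, dist (P (σ t)) (Q (τ t)) ≤ ε

theorem FrechetMatch.symm {I J : ℝ × ℝ} (h : FrechetMatch P Q ε I J) :
    FrechetMatch Q P ε J I := by
  obtain ⟨σ, τ, hσ, hτ, hσm, hτm, hσI, hτJ, hdist⟩ := h
  exact ⟨τ, σ, hτ, hσ, hτm, hσm, hτJ, hσI, fun t ht => dist_comm (P (σ t)) _ ▸ hdist t ht⟩

theorem frechetMatch_const_right {l r y : ℝ} (hlr : l ≤ r)
    (hdist : ∀ s ∈ Icc l r, dist (P s) (Q y) ≤ ε) : FrechetMatch P Q ε (l, r) (y, y) := by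
  have himage : AffineMap.lineMap l r '' Icc (0 : ℝ) 1 = Icc l r := by
    rw [← segment_eq_image_lineMap, segment_eq_Icc hlr]
  refine ⟨AffineMap.lineMap l r, fun _ => y, AffineMap.lineMap_continuous.continuousOn,
    continuousOn_const, (AffineMap.lineMap_mono hlr).monotoneOn _, monotoneOn_const, himage,
    ?_, fun t ht => hdist _ (himage ▸ mem_image_of_mem _ ht)⟩
  rw [Icc_self]
  exact (nonempty_Icc.2 zero_le_one).image_const y

theorem frechetMatch_const_left {x l r : ℝ} (hlr : l ≤ r)
    (hdist : ∀ t ∈ Icc l r, dist (P x) (Q t) ≤ ε) : FrechetMatch P Q ε (x, x) (l, r) :=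
  (frechetMatch_const_right hlr fun t ht => dist_comm (Q t) (P x) ▸ hdist t ht).symm

end FrechetMatch

theorem Fin.predAbove_castSucc_succAbove {N : ℕ} (r : Fin (N + 1)) (j : Fin N) :
    r.predAbove (r.succAbove j).castSucc = j.castSucc := by
  rcases lt_or_ge j.castSucc r with h | h
  · rw [succAbove_of_castSucc_lt _ _ h, predAbove_castSucc_of_le _ _ h.le]
  · rw [succAbove_of_le_castSucc _ _ h,
      predAbove_castSucc_of_lt _ _ (h.trans_lt castSucc_lt_succ), pred_castSucc_succ]

theorem Fin.predAbove_succ_succAbove {N : ℕ} (r : Fin (N + 1)) (j : Fin N) :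
    r.predAbove (r.succAbove j).succ = j.succ := by
  rcases lt_or_ge j.castSucc r with h | h
  · rw [succAbove_of_castSucc_lt _ _ h, succ_castSucc,
      predAbove_castSucc_of_le _ _ (castSucc_lt_iff_succ_le.mp h)]
  · rw [succAbove_of_le_castSucc _ _ h, predAbove_succ_of_le _ _ (h.trans (castSucc_le_succ _))]

section LabelledSubdivision

variable {ι κ : Type*} {N : ℕ}

def IsLabelledSubdivision (I : ι → ℝ × ℝ) (x₀ x₁ : ℝ) (u : Fin (N + 1) → ℝ) (w : Fin N ≃ ι) :
    Prop :=
  Monotone u ∧ u 0 = x₀ ∧ u (Fin.last N) = x₁ ∧ ∀ i, I (w i) = (u i.castSucc, u i.succ)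

namespace IsLabelledSubdivision

variable {I : ι → ℝ × ℝ} {x₀ x₁ : ℝ} {u : Fin (N + 1) → ℝ} {w : Fin N ≃ ι}

theorem of_monotone (hu : Monotone u) :
    IsLabelledSubdivision (fun i => (u i.castSucc, u i.succ)) (u 0) (u (Fin.last N)) u
      (Equiv.refl _) :=
  ⟨hu, rfl, rfl, fun _ => rfl⟩

theorem relabel (h : IsLabelledSubdivision I x₀ x₁ u w) (e : ι ≃ κ) {J : κ → ℝ × ℝ}
    (hJ : ∀ x, J (e x) = I x) : IsLabelledSubdivision J x₀ x₁ u (w.trans e) :=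
  ⟨h.1, h.2.1, h.2.2.1, fun i => (hJ (w i)).trans (h.2.2.2 i)⟩

/-- `u ∘ r.predAbove` repeats the value `u r`, creating the degenerate piece `[u r, u r]`. -/
theorem insertPoint (h : IsLabelledSubdivision I x₀ x₁ u w) (r : Fin (N + 1)) :
    IsLabelledSubdivision (fun o => o.elim (u r, u r) I) x₀ x₁ (u ∘ r.predAbove)
      ((finSuccEquiv' r).trans (Equiv.optionCongr w)) := by
  refine ⟨h.1.comp (Fin.predAbove_right_monotone r), by simp [h.2.1], by simp [h.2.2.1], ?_⟩
  intro i
  rcases Fin.eq_self_or_eq_succAbove r i with rfl | ⟨j, rfl⟩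
  · simp [finSuccEquiv'_at]
  · simp [finSuccEquiv'_succAbove, h.2.2.2 j, Fin.predAbove_castSucc_succAbove,
      Fin.predAbove_succ_succAbove]

theorem exists_insertPoints (h : IsLabelledSubdivision I x₀ x₁ u w) (α : Type*) [Fintype α]
    (x : α → ℝ) (hx : ∀ j, x j ∈ range u) :
    ∃ (M : ℕ) (v : Fin (M + 1) → ℝ) (w' : Fin M ≃ ι ⊕ α),
      IsLabelledSubdivision (Sum.elim I fun j => (x j, x j)) x₀ x₁ v w' := by
  suffices key : ∀ x : α → ℝ, (∀ j, x j ∈ range u) → ∃ (M : ℕ) (v : Fin (M + 1) → ℝ)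
      (w' : Fin M ≃ ι ⊕ α), IsLabelledSubdivision (Sum.elim I fun j => (x j, x j)) x₀ x₁ v w' ∧
      range u ⊆ range v from
    (key x hx).imp fun _ ⟨v, w', hv, _⟩ => ⟨v, w', hv⟩
  clear x hx
  refine Fintype.induction_empty_option (fun α β _ e ih x hx => ?_) (fun _ _ => ?_)
    (fun α _ ih x hx => ?_) α
  · obtain ⟨M, v, w', hv, hrange⟩ := ih (x ∘ e) fun j => hx (e j)
    exact ⟨M, v, _, hv.relabel (Equiv.sumCongr (Equiv.refl ι) e) (by rintro (_ | _) <;> rfl),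
      hrange⟩
  · exact ⟨N, u, _, h.relabel (Equiv.sumEmpty ι PEmpty).symm fun _ => rfl, le_rfl⟩
  · obtain ⟨M, v, w', hv, hrange⟩ := ih (x ∘ some) fun j => hx (some j)
    obtain ⟨r, hr⟩ := hrange (hx none)
    let e : Option (ι ⊕ α) ≃ ι ⊕ Option α := (Equiv.optionEquivSumPUnit.{0} _).trans
      ((Equiv.sumAssoc _ _ _).trans
        (Equiv.sumCongr (Equiv.refl ι) (Equiv.optionEquivSumPUnit.{0} α).symm))
    refine ⟨M + 1, v ∘ r.predAbove, _, (hv.insertPoint r).relabel e ?_, ?_⟩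
    · rintro (_ | _ | _) <;> simp [e, hr]
    · rw [(Fin.predAbove_surjective r).range_comp]
      exact hrange

end IsLabelledSubdivision

end LabelledSubdivision

theorem certCut_of_isLabelledSubdivision {k : ℕ} {P Q : ℝ → EuclideanSpace ℝ (Fin 2)} {ε : ℝ}
    {ι κ : Type*} {IP : ι → ℝ × ℝ} {IQ : κ → ℝ × ℝ} {u v : Fin (k + 1) → ℝ}
    {wP : Fin k ≃ ι} {wQ : Fin k ≃ κ} (hu : IsLabelledSubdivision IP 0 1 u wP)
    (hv : IsLabelledSubdivision IQ 0 1 v wQ) (e : ι ≃ κ)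
    (hmatch : ∀ x, FrechetMatch P Q ε (IP x) (IQ (e x))) : CertCut k P Q ε := by
  refine ⟨u, v, hu.1, hv.1, hu.2.1, hu.2.2.1, hv.2.1, hv.2.2.1, wP.trans (e.trans wQ.symm),
    fun i => ?_⟩
  have hi := hmatch (wP i)
  rw [hu.2.2.2 i, ← wQ.apply_symm_apply (e (wP i)), hv.2.2.2] at hi
  exact hi

theorem CertStation.certCut {k : ℕ} {P Q : ℝ → EuclideanSpace ℝ (Fin 2)} {ε : ℝ}
    (h : CertStation k P Q ε) : CertCut k P Q ε := by
  obtain ⟨p, q, -, -, rfl, a, b, ha, hb, ha0, ha1, hb0, hb1, hPst, hQst⟩ := h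
  choose J hJ using hPst
  choose I hI using hQst
  obtain ⟨M, u, wP, hu⟩ := (IsLabelledSubdivision.of_monotone ha.monotone).exists_insertPoints
    (Fin q) (fun j => a (I j).succ) fun j => ⟨_, rfl⟩
  obtain ⟨M', v, wQ, hv⟩ := (IsLabelledSubdivision.of_monotone hb.monotone).exists_insertPoints
    (Fin p) (fun i => b (J i).succ) fun i => ⟨_, rfl⟩
  obtain rfl : M = p + q := by simpa using Fintype.card_congr wP
  obtain rfl : M' = p + q := by simpa [add_comm] using Fintype.card_congr wQ
  rw [ha0, ha1] at hu
  rw [hb0, hb1] at hv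
  refine certCut_of_isLabelledSubdivision hu hv (Equiv.sumComm _ _) ?_
  rintro (i | j)
  · exact frechetMatch_const_right (ha.monotone (Fin.castSucc_le_succ _)) (hJ i)
  · exact frechetMatch_const_left (hb.monotone (Fin.castSucc_le_succ _)) (hI j)

theorem stmt_10_general (k : ℕ) (P Q : ℝ → EuclideanSpace ℝ (Fin 2)) :
    dcut k P Q ≤ dstation k P Q :=
  le_iInf₂ fun ε hε => iInf₂_le ε ⟨hε.1, hε.2.certCut⟩

/-- the `k`-Fréchet (cut) distance is at most the `k`-station distance. -/
theorem stmt_10 (k : ℕ) (P Q : ℝ → EuclideanSpace ℝ (Fin 2))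
    (hP : ContinuousOn P (Set.Icc 0 1)) (hQ : ContinuousOn Q (Set.Icc 0 1)) :
    dcut k P Q ≤ dstation k P Q :=
  stmt_10_general k P Q
end

section
/- Let γ : [0,1] → [0,1]² be a path that is a concatenation of finitely many axis-parallel segments, monotonically nondecreasing in both coordinates, with γ(0) = (0,0) and γ(1) = (1,1), and suppose γ stays in the free space F_ε(P,Q) of curves P and Q. Then for every δ > 0 there exists a strictly increasing (in both coordinates) continuous path from (0,0) to (1,1) contained in F_{ε+δ}(P,Q); consequently the Fréchet distance satisfies δ_F(P,Q) ≤ ε + δ for every δ > 0, hence δ_F(P,Q) ≤ ε. -/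
/-!
Traversing the `j`-th edge of the staircase during `[j/N, (j+1)/N]` gives a continuous path `γ`
that is monotone in both coordinates and stays in `F_ε(P, Q)`; its coordinates are an admissible
pair of reparametrisations, so `δ_F(P, Q) ≤ ε`. Pulling `γ` towards the diagonal,
`t ↦ (1 - c) γ(t) + c (t, t)`, makes both coordinates strictly increasing while moving each
parameter by at most `c`, and uniform continuity of `P` and `Q` on `[0, 1]` keeps the result
in `F_{ε+δ}(P, Q)` once `c` is small.
-/

open Set

noncomputable section

section PolygonalPath

variable {E : Type*} [AddCommGroup E] [Module ℝ E]

/-- The polygon through `w 0, …, w N`, running along the edge from `w j` to `w (j + 1)` while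
`t ∈ [j / N, (j + 1) / N]`. -/
def polygonalPath (N : ℕ) (w : ℕ → E) (t : ℝ) : E :=
  w 0 + ∑ j ∈ Finset.range N, max 0 (min 1 (N * t - j)) • (w (j + 1) - w j)

theorem polygonalPath_eq_of_le_of_le (N : ℕ) (w : ℕ → E) {i : ℕ} (hi : i < N) {t : ℝ}
    (h₁ : (i : ℝ) ≤ N * t) (h₂ : N * t ≤ i + 1) :
    polygonalPath N w t = w i + (N * t - i) • (w (i + 1) - w i) := by
  have before : ∀ j ∈ Finset.range i, max 0 (min 1 (N * t - j)) • (w (j + 1) - w j)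
      = w (j + 1) - w j := by
    intro j hj
    have : (j : ℝ) + 1 ≤ i := by exact_mod_cast Finset.mem_range.1 hj
    rw [min_eq_left (by linarith), max_eq_right zero_le_one, one_smul]
  have after : ∀ j ∈ Finset.Ico (i + 1) N, max 0 (min 1 (N * t - j)) • (w (j + 1) - w j) = 0 := by
    intro j hj
    have : (i : ℝ) + 1 ≤ j := by exact_mod_cast (Finset.mem_Ico.1 hj).1
    rw [max_eq_left ((min_le_right _ _).trans (by linarith)), zero_smul]
  rw [polygonalPath, ← Finset.sum_range_add_sum_Ico _ hi, Finset.sum_range_succ,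
    Finset.sum_congr rfl before, Finset.sum_congr rfl after, Finset.sum_range_sub,
    Finset.sum_const_zero, add_zero, min_eq_right (by linarith), max_eq_right (by linarith)]
  abel

theorem polygonalPath_zero (N : ℕ) (w : ℕ → E) : polygonalPath N w 0 = w 0 := by
  refine add_eq_left.2 (Finset.sum_eq_zero fun j _ => ?_)
  rw [max_eq_left ((min_le_right _ _).trans (by simp)), zero_smul]

theorem polygonalPath_one (N : ℕ) (w : ℕ → E) : polygonalPath N w 1 = w N := by
  have edge : ∀ j ∈ Finset.range N, max 0 (min 1 ((N : ℝ) * 1 - j)) • (w (j + 1) - w j)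
      = w (j + 1) - w j := by
    intro j hj
    have : (j : ℝ) + 1 ≤ N := by exact_mod_cast Finset.mem_range.1 hj
    rw [min_eq_left (by linarith), max_eq_right zero_le_one, one_smul]
  rw [polygonalPath, Finset.sum_congr rfl edge, Finset.sum_range_sub, add_sub_cancel]

theorem exists_nat_le_mul_le_succ {N : ℕ} (hN : 0 < N) {t : ℝ} (ht : t ∈ Icc (0 : ℝ) 1) :
    ∃ i < N, (i : ℝ) ≤ N * t ∧ N * t ≤ i + 1 := by
  have hNt : 0 ≤ (N : ℝ) * t := mul_nonneg N.cast_nonneg ht.1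
  rcases ht.2.lt_or_eq with ht1 | rfl
  · refine ⟨⌊(N : ℝ) * t⌋₊, (Nat.floor_lt hNt).2 ?_, Nat.floor_le hNt,
      (Nat.lt_floor_add_one _).le⟩
    exact mul_lt_of_lt_one_right (by exact_mod_cast hN) ht1
  · refine ⟨N - 1, Nat.sub_lt hN one_pos, ?_, ?_⟩ <;> simp [Nat.cast_pred hN]

theorem exists_polygonalPath_mem_segment {N : ℕ} (hN : 0 < N) (w : ℕ → E) {t : ℝ}
    (ht : t ∈ Icc (0 : ℝ) 1) : ∃ i < N, polygonalPath N w t ∈ segment ℝ (w i) (w (i + 1)) := by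
  obtain ⟨i, hi, h₁, h₂⟩ := exists_nat_le_mul_le_succ hN ht
  refine ⟨i, hi, ?_⟩
  rw [polygonalPath_eq_of_le_of_le N w hi h₁ h₂, segment_eq_image']
  exact ⟨_, ⟨by linarith, by linarith⟩, rfl⟩

theorem continuous_polygonalPath [TopologicalSpace E] [IsTopologicalAddGroup E]
    [ContinuousSMul ℝ E] (N : ℕ) (w : ℕ → E) : Continuous (polygonalPath N w) := by
  unfold polygonalPath
  fun_prop

theorem monotone_polygonalPath [PartialOrder E] [IsOrderedAddMonoid E] [SMulPosMono ℝ E]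
    {N : ℕ} {w : ℕ → E} (hw : ∀ j < N, w j ≤ w (j + 1)) : Monotone (polygonalPath N w) := by
  intro a b hab
  unfold polygonalPath
  gcongr with j hj
  exact sub_nonneg.2 (hw j (Finset.mem_range.1 hj))

end PolygonalPath

section FreeSpace

variable {X : Type*} [PseudoMetricSpace X]

def freeSpace (P Q : ℝ → X) (ε : ℝ) : Set (ℝ × ℝ) :=
  {x | x.1 ∈ Icc (0 : ℝ) 1 ∧ x.2 ∈ Icc (0 : ℝ) 1 ∧ dist (P x.1) (Q x.2) ≤ ε}

def frechetDist (P Q : ℝ → X) : ℝ :=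
  sInf {r : ℝ | ∃ σ τ : ℝ → ℝ,
    ContinuousOn σ (Icc 0 1) ∧ ContinuousOn τ (Icc 0 1) ∧
    MonotoneOn σ (Icc 0 1) ∧ MonotoneOn τ (Icc 0 1) ∧
    σ '' Icc 0 1 = Icc 0 1 ∧ τ '' Icc 0 1 = Icc 0 1 ∧
    ∀ t ∈ Icc (0 : ℝ) 1, dist (P (σ t)) (Q (τ t)) ≤ r}

theorem frechetDist_le_of_monotoneOn {P Q : ℝ → X} {γ : ℝ → ℝ × ℝ} {r : ℝ}
    (hγc : ContinuousOn γ (Icc 0 1)) (hγm : MonotoneOn γ (Icc 0 1))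
    (hγ₀ : γ 0 = (0, 0)) (hγ₁ : γ 1 = (1, 1)) (hγ : ∀ t ∈ Icc (0 : ℝ) 1, γ t ∈ freeSpace P Q r) :
    frechetDist P Q ≤ r := by
  have image_eq {f : ℝ → ℝ} (hfc : ContinuousOn f (Icc 0 1)) (hfm : MonotoneOn f (Icc 0 1))
      (hf₀ : f 0 = 0) (hf₁ : f 1 = 1) : f '' Icc 0 1 = Icc 0 1 := by
    rw [hfc.image_Icc_of_monotoneOn zero_le_one hfm, hf₀, hf₁]
  refine csInf_le
    ⟨0, fun _ ⟨_, _, _, _, _, _, _, _, h⟩ => dist_nonneg.trans (h 0 ⟨le_rfl, zero_le_one⟩)⟩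
    ⟨_, _, hγc.fst, hγc.snd, monotone_fst.comp_monotoneOn hγm, monotone_snd.comp_monotoneOn hγm,
      image_eq hγc.fst (monotone_fst.comp_monotoneOn hγm) (by simp [hγ₀]) (by simp [hγ₁]),
      image_eq hγc.snd (monotone_snd.comp_monotoneOn hγm) (by simp [hγ₀]) (by simp [hγ₁]),
      fun t ht => (hγ t ht).2.2⟩

theorem MonotoneOn.strictMonoOn_combo_id {s : Set ℝ} {f : ℝ → ℝ} (hf : MonotoneOn f s) {c : ℝ}
    (hc₀ : 0 < c) (hc₁ : c ≤ 1) : StrictMonoOn (fun t => (1 - c) * f t + c * t) s :=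
  fun _ ha _ hb hab => add_lt_add_of_le_of_lt
    (mul_le_mul_of_nonneg_left (hf ha hb hab.le) (sub_nonneg.2 hc₁))
    (mul_lt_mul_of_pos_left hab hc₀)

theorem IsCompact.exists_pos_dist_le_dist_add {α : Type*} [PseudoMetricSpace α] {K : Set α}
    (hK : IsCompact K) {P Q : α → X} (hP : ContinuousOn P K) (hQ : ContinuousOn Q K) {δ : ℝ}
    (hδ : 0 < δ) : ∃ η > 0, ∀ s ∈ K, ∀ s' ∈ K, ∀ t ∈ K, ∀ t' ∈ K, dist s' s ≤ η → dist t' t ≤ η →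
      dist (P s') (Q t') ≤ dist (P s) (Q t) + δ := by
  obtain ⟨ηP, hηP, hP⟩ := Metric.uniformContinuousOn_iff_le.1
    (hK.uniformContinuousOn_of_continuous hP) (δ / 2) (by linarith)
  obtain ⟨ηQ, hηQ, hQ⟩ := Metric.uniformContinuousOn_iff_le.1
    (hK.uniformContinuousOn_of_continuous hQ) (δ / 2) (by linarith)
  refine ⟨min ηP ηQ, lt_min hηP hηQ, fun s hs s' hs' t ht t' ht' hss htt => ?_⟩
  calc dist (P s') (Q t') ≤ dist (P s') (P s) + dist (P s) (Q t) + dist (Q t) (Q t') :=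
        dist_triangle4 _ _ _ _
    _ ≤ δ / 2 + dist (P s) (Q t) + δ / 2 := by
        gcongr
        · exact hP s' hs' s hs (hss.trans (min_le_left _ _))
        · exact dist_comm (Q t) _ ▸ hQ t' ht' t ht (htt.trans (min_le_right _ _))
    _ = dist (P s) (Q t) + δ := by ring

theorem exists_strictMonoOn_path_of_monotoneOn {P Q : ℝ → X} (hP : ContinuousOn P (Icc 0 1))
    (hQ : ContinuousOn Q (Icc 0 1)) {γ : ℝ → ℝ × ℝ} {ε : ℝ} (hγc : ContinuousOn γ (Icc 0 1))
    (hγm : MonotoneOn γ (Icc 0 1)) (hγ₀ : γ 0 = (0, 0)) (hγ₁ : γ 1 = (1, 1))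
    (hγ : ∀ t ∈ Icc (0 : ℝ) 1, γ t ∈ freeSpace P Q ε) {δ : ℝ} (hδ : 0 < δ) :
    ∃ γ' : ℝ → ℝ × ℝ, ContinuousOn γ' (Icc 0 1) ∧ γ' 0 = (0, 0) ∧ γ' 1 = (1, 1) ∧
      StrictMonoOn (fun t => (γ' t).1) (Icc 0 1) ∧ StrictMonoOn (fun t => (γ' t).2) (Icc 0 1) ∧
      ∀ t ∈ Icc (0 : ℝ) 1, γ' t ∈ freeSpace P Q (ε + δ) := by
  obtain ⟨η, hη, hPQ⟩ := isCompact_Icc.exists_pos_dist_le_dist_add hP hQ hδ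
  set c := min 1 η
  have hc₀ : 0 < c := lt_min one_pos hη
  have hc₁ : c ≤ 1 := min_le_left _ _
  have near {a t : ℝ} (ha : a ∈ Icc (0 : ℝ) 1) (ht : t ∈ Icc (0 : ℝ) 1) :
      (1 - c) * a + c * t ∈ Icc (0 : ℝ) 1 ∧ dist ((1 - c) * a + c * t) a ≤ η := by
    refine ⟨convex_Icc 0 1 ha ht (sub_nonneg.2 hc₁) hc₀.le (by ring), ?_⟩
    rw [Real.dist_eq, show (1 - c) * a + c * t - a = c * (t - a) by ring, abs_mul,
      abs_of_pos hc₀]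
    calc c * |t - a| ≤ c * 1 := by
          gcongr
          exact abs_sub_le_iff.2 ⟨by linarith [ht.2, ha.1], by linarith [ht.1, ha.2]⟩
      _ ≤ η := (mul_one c).trans_le (min_le_right 1 η)
  refine ⟨fun t => ((1 - c) * (γ t).1 + c * t, (1 - c) * (γ t).2 + c * t), by fun_prop,
    by simp [hγ₀], by simp [hγ₁],
    (monotone_fst.comp_monotoneOn hγm).strictMonoOn_combo_id hc₀ hc₁,
    (monotone_snd.comp_monotoneOn hγm).strictMonoOn_combo_id hc₀ hc₁, fun t ht => ?_⟩
  obtain ⟨hs, ht', hd⟩ := hγ t ht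
  obtain ⟨hs', hds⟩ := near hs ht
  obtain ⟨ht'', hdt⟩ := near ht' ht
  exact ⟨hs', ht'', (hPQ _ hs _ hs' _ ht' _ ht'' hds hdt).trans (by linarith)⟩

end FreeSpace

end

theorem stmt_11_general (P Q : ℝ → EuclideanSpace ℝ (Fin 2))
    (hP : ContinuousOn P (Icc 0 1)) (hQ : ContinuousOn Q (Icc 0 1))
    (ε : ℝ)
    (N : ℕ) (z : Fin (N + 1) → ℝ × ℝ)
    (hz0 : z 0 = (0, 0)) (hzN : z (Fin.last N) = (1, 1))
    (hmono : ∀ i : Fin N, (z i.castSucc).1 ≤ (z i.succ).1 ∧ (z i.castSucc).2 ≤ (z i.succ).2)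
    (hfree : ∀ i : Fin N, ∀ x ∈ segment ℝ (z i.castSucc) (z i.succ),
      x.1 ∈ Icc (0:ℝ) 1 ∧ x.2 ∈ Icc (0:ℝ) 1 ∧ dist (P x.1) (Q x.2) ≤ ε) :
    (∀ δ : ℝ, 0 < δ → ∃ γ : ℝ → ℝ × ℝ,
      ContinuousOn γ (Icc 0 1) ∧ γ 0 = (0, 0) ∧ γ 1 = (1, 1) ∧
      StrictMonoOn (fun t => (γ t).1) (Icc 0 1) ∧
      StrictMonoOn (fun t => (γ t).2) (Icc 0 1) ∧
      ∀ t ∈ Icc (0:ℝ) 1, (γ t).1 ∈ Icc (0:ℝ) 1 ∧ (γ t).2 ∈ Icc (0:ℝ) 1 ∧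
        dist (P (γ t).1) (Q (γ t).2) ≤ ε + δ) ∧
    sInf {r : ℝ | ∃ σ τ : ℝ → ℝ,
      ContinuousOn σ (Icc 0 1) ∧ ContinuousOn τ (Icc 0 1) ∧
      MonotoneOn σ (Icc 0 1) ∧ MonotoneOn τ (Icc 0 1) ∧
      σ '' Icc 0 1 = Icc 0 1 ∧ τ '' Icc 0 1 = Icc 0 1 ∧
      ∀ t ∈ Icc (0:ℝ) 1, dist (P (σ t)) (Q (τ t)) ≤ r} ≤ ε := by
  have hN : 0 < N := Nat.pos_of_ne_zero fun h => by
    subst h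
    simp [hz0] at hzN
  have clamp_castSucc {j : ℕ} (hj : j < N) : Fin.clamp j N = (⟨j, hj⟩ : Fin N).castSucc :=
    Fin.ext (min_eq_left hj.le)
  have clamp_succ {j : ℕ} (hj : j < N) : Fin.clamp (j + 1) N = (⟨j, hj⟩ : Fin N).succ :=
    Fin.ext (min_eq_left hj)
  set w : ℕ → ℝ × ℝ := fun n => z (Fin.clamp n N)
  have edge_mono (j : ℕ) (hj : j < N) : w j ≤ w (j + 1) := by
    simpa only [w, clamp_castSucc hj, clamp_succ hj, Prod.le_def] using hmono ⟨j, hj⟩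
  set γ := polygonalPath N w
  have hγc : ContinuousOn γ (Icc 0 1) := (continuous_polygonalPath N w).continuousOn
  have hγm : MonotoneOn γ (Icc 0 1) := (monotone_polygonalPath edge_mono).monotoneOn _
  have hγ₀ : γ 0 = (0, 0) := by simp [γ, polygonalPath_zero, w, Fin.clamp, ← hz0]
  have hγ₁ : γ 1 = (1, 1) := by simp [γ, polygonalPath_one, w, Fin.clamp_eq_last, hzN]
  have hγ (t : ℝ) (ht : t ∈ Icc (0 : ℝ) 1) : γ t ∈ freeSpace P Q ε := by
    obtain ⟨i, hi, hseg⟩ := exists_polygonalPath_mem_segment hN w ht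
    exact hfree ⟨i, hi⟩ _ (by simpa only [w, clamp_castSucc hi, clamp_succ hi] using hseg)
  exact ⟨fun δ hδ => exists_strictMonoOn_path_of_monotoneOn hP hQ hγc hγm hγ₀ hγ₁ hγ hδ,
    frechetDist_le_of_monotoneOn hγc hγm hγ₀ hγ₁ hγ⟩

/-- If a monotone axis-parallel staircase path (given by its corner points `z`)
from `(0,0)` to `(1,1)` lies in the free space `F_ε(P,Q)`, then for every `δ > 0` there is a
strictly monotone continuous path from `(0,0)` to `(1,1)` inside `F_{ε+δ}(P,Q)`; consequently
the Fréchet distance of `P` and `Q` is at most `ε`. -/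
theorem stmt_11 (P Q : ℝ → EuclideanSpace ℝ (Fin 2))
    (hP : ContinuousOn P (Icc 0 1)) (hQ : ContinuousOn Q (Icc 0 1))
    (ε : ℝ) (hε : 0 ≤ ε)
    (N : ℕ) (z : Fin (N + 1) → ℝ × ℝ)
    (hz0 : z 0 = (0, 0)) (hzN : z (Fin.last N) = (1, 1))
    (hmono : ∀ i : Fin N, (z i.castSucc).1 ≤ (z i.succ).1 ∧ (z i.castSucc).2 ≤ (z i.succ).2)
    (haxis : ∀ i : Fin N, (z i.castSucc).1 = (z i.succ).1 ∨ (z i.castSucc).2 = (z i.succ).2)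
    (hfree : ∀ i : Fin N, ∀ x ∈ segment ℝ (z i.castSucc) (z i.succ),
      x.1 ∈ Icc (0:ℝ) 1 ∧ x.2 ∈ Icc (0:ℝ) 1 ∧ dist (P x.1) (Q x.2) ≤ ε) :
    (∀ δ : ℝ, 0 < δ → ∃ γ : ℝ → ℝ × ℝ,
      ContinuousOn γ (Icc 0 1) ∧ γ 0 = (0, 0) ∧ γ 1 = (1, 1) ∧
      StrictMonoOn (fun t => (γ t).1) (Icc 0 1) ∧
      StrictMonoOn (fun t => (γ t).2) (Icc 0 1) ∧
      ∀ t ∈ Icc (0:ℝ) 1, (γ t).1 ∈ Icc (0:ℝ) 1 ∧ (γ t).2 ∈ Icc (0:ℝ) 1 ∧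
        dist (P (γ t).1) (Q (γ t).2) ≤ ε + δ) ∧
    sInf {r : ℝ | ∃ σ τ : ℝ → ℝ,
      ContinuousOn σ (Icc 0 1) ∧ ContinuousOn τ (Icc 0 1) ∧
      MonotoneOn σ (Icc 0 1) ∧ MonotoneOn τ (Icc 0 1) ∧
      σ '' Icc 0 1 = Icc 0 1 ∧ τ '' Icc 0 1 = Icc 0 1 ∧
      ∀ t ∈ Icc (0:ℝ) 1, dist (P (σ t)) (Q (τ t)) ≤ r} ≤ ε :=
  stmt_11_general P Q hP hQ ε N z hz0 hzN hmono hfree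
end

section
/- Let K ⊂ ℝ² be a compact convex set such that every boundary point p of K admits a horizontal segment H_p ⊆ K and a vertical segment V_p ⊆ K, both containing p, with ‖H_p‖ + ‖V_p‖ ≥ c for a fixed constant c > 0. Let a, b ∈ K with a ≤ b coordinatewise. Then the greedy staircase construction — starting at a and alternately appending a maximal horizontal segment rightward and a maximal vertical segment upward within K, clipped so as not to exceed b's coordinates — reaches b after at most ⌈2((b₁ − a₁) + (b₂ − a₂))/c⌉ + 4 segments, producing an x- and y-monotone axis-parallel path from a to b inside K. -/
/-!
Greedy staircase. From a corner `p` that is highest in its column (below height `b.2`), walk right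
as far as `K` allows (up to `b.1`), then up as far as `K` allows (up to `b.2`). The turning point
`q` lies on the frontier of `K`. Convexity, applied to segments ending at `b`, keeps the horizontal
chord at `q` to the right of `p` and the vertical chord above `q`, while maximality keeps them below
and left of the new corner. So each two-edge round advances `x + y` by at least `c`, unless it
reaches the row or column of `b`, after which at most one more edge is needed.
-/

open Set Filter Topology
open scoped SetRel

lemma Nat.two_mul_ceil_le_ceil_two_mul_add_one {α : Type*} [Field α] [LinearOrder α]
    [IsStrictOrderedRing α] [FloorSemiring α] {x : α} (hx : 0 ≤ x) :
    2 * ⌈x⌉₊ ≤ ⌈2 * x⌉₊ + 1 := by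
  have hlt : ((2 * ⌈x⌉₊ : ℕ) : α) < (⌈2 * x⌉₊ + 2 : ℕ) := by
    push_cast
    linarith [Nat.ceil_lt_add_one hx, Nat.le_ceil (2 * x)]
  have := Nat.cast_lt.1 hlt
  omega

lemma le_of_isGreatest_inter_Iic {α : Type*} [LinearOrder α] {S : Set α} {h m t : α}
    (hm : IsGreatest (S ∩ Iic h) m) (hmh : m < h) (hS : Icc m t ⊆ S) : t ≤ m := by
  by_contra! hmt
  exact (lt_min hmt hmh).not_ge
    (hm.2 ⟨hS ⟨le_min hmt.le hmh.le, min_le_left _ _⟩, min_le_right _ _⟩)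

section JoinedWithin

variable {α : Type*} {r : SetRel α α} {a b c : α} {n m : ℕ}

def JoinedWithin (r : SetRel α α) (n : ℕ) (a b : α) : Prop :=
  ∃ s : RelSeries r, s.head = a ∧ s.last = b ∧ s.length ≤ n

lemma JoinedWithin.refl (r : SetRel α α) (a : α) : JoinedWithin r 0 a a :=
  ⟨RelSeries.singleton r a, rfl, rfl, le_rfl⟩

lemma JoinedWithin.mono (h : JoinedWithin r n a b) (hnm : n ≤ m) : JoinedWithin r m a b :=
  let ⟨s, hsa, hsb, hs⟩ := h
  ⟨s, hsa, hsb, hs.trans hnm⟩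

lemma JoinedWithin.cons (hab : a ~[r] b) (h : JoinedWithin r n b c) :
    JoinedWithin r (n + 1) a c := by
  obtain ⟨s, rfl, rfl, hs⟩ := h
  exact ⟨s.cons a hab, rfl, s.last_cons a hab, by simpa using hs⟩

end JoinedWithin

lemma IsCompact.preimage_swap {X Y : Type*} [TopologicalSpace X] [TopologicalSpace Y]
    {K : Set (X × Y)} (hK : IsCompact K) : IsCompact (Prod.swap ⁻¹' K) :=
  image_swap_eq_preimage_swap ▸ hK.image continuous_swap

lemma Convex.preimage_swap {𝕜 E F : Type*} [Semiring 𝕜] [PartialOrder 𝕜] [AddCommMonoid E]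
    [Module 𝕜 E] [AddCommMonoid F] [Module 𝕜 F] {K : Set (E × F)} (hK : Convex 𝕜 K) :
    Convex 𝕜 (Prod.swap ⁻¹' K) :=
  hK.linear_preimage (LinearEquiv.prodComm 𝕜 F E).toLinearMap

def HasAxisChordsAtLeast (K : Set (ℝ × ℝ)) (c : ℝ) : Prop :=
  ∀ p ∈ frontier K, ∃ x₁ x₂ y₁ y₂ : ℝ,
    x₁ ≤ p.1 ∧ p.1 ≤ x₂ ∧ y₁ ≤ p.2 ∧ p.2 ≤ y₂ ∧
    (Set.Icc x₁ x₂ ×ˢ ({p.2} : Set ℝ)) ⊆ K ∧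
    (({p.1} : Set ℝ) ×ˢ Set.Icc y₁ y₂) ⊆ K ∧
    c ≤ (x₂ - x₁) + (y₂ - y₁)

def stairStep (K : Set (ℝ × ℝ)) : SetRel (ℝ × ℝ) (ℝ × ℝ) :=
  {pq | pq.1 ≤ pq.2 ∧ (pq.1.1 = pq.2.1 ∨ pq.1.2 = pq.2.2) ∧ segment ℝ pq.1 pq.2 ⊆ K}

def IsTopBelow (K : Set (ℝ × ℝ)) (h : ℝ) (p : ℝ × ℝ) : Prop :=
  IsGreatest ({y | (p.1, y) ∈ K} ∩ Iic h) p.2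

def IsRightmostBelow (K : Set (ℝ × ℝ)) (h : ℝ) (p : ℝ × ℝ) : Prop :=
  IsGreatest ({x | (x, p.2) ∈ K} ∩ Iic h) p.1

variable {K : Set (ℝ × ℝ)} {c h : ℝ} {p b : ℝ × ℝ}

lemma exists_isTopBelow (hK : IsCompact K) (hp : p ∈ K) (hph : p.2 ≤ h) :
    ∃ y, p.2 ≤ y ∧ IsTopBelow K h (p.1, y) := by
  have hcpt : IsCompact ({y | (p.1, y) ∈ K} ∩ Iic h) := by
    refine (hK.image continuous_snd).of_isClosed_subset ?_ fun y hy => ⟨_, hy.1, rfl⟩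
    exact (hK.isClosed.preimage (Continuous.prodMk_right p.1)).inter isClosed_Iic
  obtain ⟨y, hy⟩ := hcpt.exists_isGreatest ⟨p.2, hp, hph⟩
  exact ⟨y, hy.2 ⟨hp, hph⟩, hy⟩

lemma exists_isRightmostBelow (hK : IsCompact K) (hp : p ∈ K) (hph : p.1 ≤ h) :
    ∃ x, p.1 ≤ x ∧ IsRightmostBelow K h (x, p.2) :=
  -- rows of `K` are, definitionally, the columns of `Prod.swap ⁻¹' K`
  exists_isTopBelow (p := p.swap) hK.preimage_swap hp hph

lemma IsTopBelow.le_of_mem_row (hK : Convex ℝ K) (hp : IsTopBelow K b.2 p) (hb : b ∈ K)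
    (hpb₁ : p.1 ≤ b.1) (hpb₂ : p.2 < b.2) {x : ℝ} (hx : (x, p.2) ∈ K) : p.1 ≤ x := by
  by_contra! hxp
  -- the segment from `(x, p.2)` to `b` crosses the column of `p` strictly above `p`
  set t := (p.1 - x) / (b.1 - x)
  have htb : t * (b.1 - x) = p.1 - x := div_mul_cancel₀ _ (by linarith)
  have ht₀ : 0 < t := div_pos (by linarith) (by linarith)
  have ht₁ : t ≤ 1 := div_le_one_of_le₀ (by linarith) (by linarith)
  have hmem := hK.add_smul_sub_mem hx hb ⟨ht₀.le, ht₁⟩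
  have hpt : (x, p.2) + t • (b - (x, p.2)) = (p.1, p.2 + t * (b.2 - p.2)) :=
    Prod.ext (by simp only [Prod.fst_add, Prod.smul_fst, Prod.fst_sub, smul_eq_mul]; linarith) rfl
  have hle := hp.2 ⟨show (p.1, p.2 + t * (b.2 - p.2)) ∈ K from hpt ▸ hmem,
    show p.2 + t * (b.2 - p.2) ≤ b.2 by nlinarith⟩
  nlinarith

lemma IsRightmostBelow.le_of_mem_column (hK : Convex ℝ K) (hq : IsRightmostBelow K b.1 p)
    (hb : b ∈ K) (hpb₁ : p.1 < b.1) (hpb₂ : p.2 ≤ b.2) {y : ℝ} (hy : (p.1, y) ∈ K) :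
    p.2 ≤ y :=
  IsTopBelow.le_of_mem_row (b := b.swap) (p := p.swap) hK.preimage_swap hq hb hpb₂ hpb₁ hy

lemma IsRightmostBelow.mem_frontier (hK : IsClosed K) (hp : IsRightmostBelow K h p)
    (hph : p.1 < h) : p ∈ frontier K := by
  rw [hK.frontier_eq]
  refine ⟨hp.1.1, fun hint => ?_⟩
  have hrow : ∀ᶠ x in 𝓝 p.1, (x, p.2) ∈ K :=
    (Continuous.prodMk_left p.2).continuousAt.preimage_mem_nhds (mem_interior_iff_mem_nhds.1 hint)
  obtain ⟨x, hpx, hx, hxh⟩ := (hrow.and (Iic_mem_nhds hph)).exists_gt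
  exact (hp.2 ⟨hx, hxh⟩).not_gt hpx

/-- The chords at the frontier point `(x, p.2)` fit inside the box spanned by `p` and `(x, y)`. -/
lemma HasAxisChordsAtLeast.le_sub_add_sub (hbd : HasAxisChordsAtLeast K c) (hKc : IsCompact K)
    (hKconv : Convex ℝ K) (hb : b ∈ K) (hp : IsTopBelow K b.2 p) {x y : ℝ}
    (hpx : p.1 ≤ x) (hq : IsRightmostBelow K b.1 (x, p.2)) (hr : IsTopBelow K b.2 (x, y))
    (hxb : x < b.1) (hyb : y < b.2) : c ≤ (x - p.1) + (y - p.2) := by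
  obtain ⟨x₁, x₂, y₁, y₂, hx₁, hx₂, hy₁, hy₂, hH, hV, hlen⟩ :=
    hbd _ (hq.mem_frontier hKc.isClosed hxb)
  have hpy : p.2 ≤ y := hr.2 ⟨hq.1.1, hp.1.2⟩
  have hx₂x : x₂ ≤ x :=
    le_of_isGreatest_inter_Iic hq hxb fun x' hx' => hH ⟨⟨hx₁.trans hx'.1, hx'.2⟩, rfl⟩
  have hy₂y : y₂ ≤ y :=
    le_of_isGreatest_inter_Iic hr hyb fun y' hy' => hV ⟨rfl, hy₁.trans (hpy.trans hy'.1), hy'.2⟩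
  have hpx₁ : p.1 ≤ x₁ :=
    hp.le_of_mem_row hKconv hb (by linarith) (by linarith) (hH ⟨⟨le_rfl, hx₁.trans hx₂⟩, rfl⟩)
  have hpy₁ : p.2 ≤ y₁ :=
    hq.le_of_mem_column hKconv hb hxb (by linarith) (hV ⟨rfl, le_rfl, hy₁.trans hy₂⟩)
  linarith

lemma joinedWithin_of_isTopBelow (hKc : IsCompact K) (hKconv : Convex ℝ K)
    (hbd : HasAxisChordsAtLeast K c) (hb : b ∈ K) (n : ℕ) (hp : IsTopBelow K b.2 p)
    (hpb : p.1 ≤ b.1) (hn : (b.1 - p.1) + (b.2 - p.2) ≤ n * c) :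
    JoinedWithin (stairStep K) (2 * n + 2) p b := by
  induction n generalizing p with
  | zero =>
    have hpb₂ : p.2 ≤ b.2 := hp.1.2
    rw [Nat.cast_zero, zero_mul] at hn
    have hpb' : p = b := Prod.ext (by linarith) (by linarith)
    exact hpb' ▸ (JoinedWithin.refl _ p).mono (Nat.zero_le _)
  | succ n ih =>
    obtain ⟨x, hpx, hq⟩ := exists_isRightmostBelow hKc hp.1.1 hpb
    obtain ⟨y, hpy, hr⟩ := exists_isTopBelow hKc hq.1.1 hp.1.2
    have hright : p ~[stairStep K] (x, p.2) :=
      ⟨⟨hpx, le_rfl⟩, Or.inr rfl, hKconv.segment_subset hp.1.1 hq.1.1⟩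
    have hup : (x, p.2) ~[stairStep K] (x, y) :=
      ⟨⟨le_rfl, hpy⟩, Or.inl rfl, hKconv.segment_subset hq.1.1 hr.1.1⟩
    suffices JoinedWithin (stairStep K) (2 * n + 2) (x, y) b from
      ((this.cons hup).cons hright).mono (by omega)
    have hxb : x ≤ b.1 := hq.1.2
    have hyb : y ≤ b.2 := hr.1.2
    rcases hxb.eq_or_lt with hxb | hxb
    · have hrb : (x, y) = b := Prod.ext hxb (le_antisymm hr.1.2 (hr.2 ⟨hxb ▸ hb, self_mem_Iic⟩))
      exact hrb ▸ (JoinedWithin.refl _ _).mono (Nat.zero_le _)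
    rcases hyb.eq_or_lt with hyb | hyb
    · have hlast : (x, y) ~[stairStep K] b :=
        ⟨⟨hxb.le, hyb.le⟩, Or.inr hyb, hKconv.segment_subset hr.1.1 hb⟩
      exact ((JoinedWithin.refl _ b).cons hlast).mono (by omega)
    have := hbd.le_sub_add_sub hKc hKconv hb hp hpx hq hr hxb hyb
    exact ih hr hxb.le (by push_cast at hn; linarith)

/-- In a compact convex set `K ⊂ ℝ²` in which every boundary point admits
horizontal and vertical segments through it inside `K` of total length at least `c > 0`,
any two points `a ≤ b` (coordinatewise) of `K` can be joined by an `x`- and `y`-monotone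
axis-parallel staircase path inside `K` using at most
`⌈2((b₁ − a₁) + (b₂ − a₂))/c⌉ + 4` segments. -/
theorem stmt_14 (K : Set (ℝ × ℝ)) (hKc : IsCompact K) (hKconv : Convex ℝ K)
    (c : ℝ) (hc : 0 < c)
    (hbd : ∀ p ∈ frontier K, ∃ x₁ x₂ y₁ y₂ : ℝ,
      x₁ ≤ p.1 ∧ p.1 ≤ x₂ ∧ y₁ ≤ p.2 ∧ p.2 ≤ y₂ ∧
      (Set.Icc x₁ x₂ ×ˢ ({p.2} : Set ℝ)) ⊆ K ∧
      (({p.1} : Set ℝ) ×ˢ Set.Icc y₁ y₂) ⊆ K ∧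
      c ≤ (x₂ - x₁) + (y₂ - y₁))
    (a b : ℝ × ℝ) (ha : a ∈ K) (hb : b ∈ K) (h1 : a.1 ≤ b.1) (h2 : a.2 ≤ b.2) :
    ∃ (N : ℕ) (z : Fin (N + 1) → ℝ × ℝ),
      N ≤ ⌈2 * ((b.1 - a.1) + (b.2 - a.2)) / c⌉₊ + 4 ∧
      z 0 = a ∧ z (Fin.last N) = b ∧
      (∀ i : Fin N, (z i.castSucc).1 ≤ (z i.succ).1 ∧ (z i.castSucc).2 ≤ (z i.succ).2) ∧
      (∀ i : Fin N, (z i.castSucc).1 = (z i.succ).1 ∨ (z i.castSucc).2 = (z i.succ).2) ∧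
      (∀ i : Fin N, segment ℝ (z i.castSucc) (z i.succ) ⊆ K) := by
  set Δ := (b.1 - a.1) + (b.2 - a.2)
  have hΔ : 0 ≤ Δ / c := div_nonneg (by linarith) hc.le
  have hΔn : Δ ≤ ⌈Δ / c⌉₊ * c := (div_le_iff₀ hc).1 (Nat.le_ceil _)
  obtain ⟨y, hay, hr⟩ := exists_isTopBelow hKc ha h2
  have hup : a ~[stairStep K] (a.1, y) :=
    ⟨⟨le_rfl, hay⟩, Or.inl rfl, hKconv.segment_subset ha hr.1.1⟩
  obtain ⟨s, rfl, rfl, hs⟩ :=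
    (joinedWithin_of_isTopBelow hKc hKconv hbd hb _ hr h1 (by dsimp only; linarith)).cons hup
  refine ⟨s.length, s, ?_, rfl, rfl, fun i => (s.step i).1, fun i => (s.step i).2.1,
    fun i => (s.step i).2.2⟩
  have := Nat.two_mul_ceil_le_ceil_two_mul_add_one hΔ
  rw [mul_div_assoc]
  omega
end
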